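/- arXiv:1610.04772 — 2 statements merged into one kernel-verified Lean document; each statement's English description precedes it below -/
import Mathlib

section
/- Let Ω = ℝ² \ cl(𝓗) where 𝓗 is a bounded open set containing 0 with the interior tangent ball property. Then there exists at most one function φ continuous on cl(Ω), twice continuously differentiable and harmonic in Ω, with φ = 0 on ∂Ω and |φ(x) − log|x|| bounded on cl(Ω). -/
/-!
The difference `u = φ₁ - φ₂` is harmonic in `Ω`, vanishes on `∂Ω` and is bounded, the logarithms
cancelling. Since `0 ∉ cl Ω`, some disc `B(0, ρ)` misses `cl Ω`. For every `a > 0` the harmonic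
function `a (log ‖x‖ - log ρ)` is nonnegative on `cl Ω` and exceeds `sup u` on a large circle, so
the weak maximum principle on the bounded sets `B(0, R) ∩ Ω` gives `u ≤ a (log ‖x‖ - log ρ)`;
letting `a → 0` gives `u ≤ 0`, and symmetrically `-u ≤ 0`. The weak maximum principle follows from
the second-derivative test applied to `u + ε ‖x‖²`, whose Laplacian is positive.
-/

open Metric Set

noncomputable def laplacian (f : EuclideanSpace ℝ (Fin 2) → ℝ)
    (x : EuclideanSpace ℝ (Fin 2)) : ℝ :=
  ∑ i, fderiv ℝ (fun y => fderiv ℝ f y (EuclideanSpace.single i 1)) x (EuclideanSpace.single i 1)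

/-- The interior tangent ball property for the hole `H`. -/
def InteriorTangentBall (H : Set (EuclideanSpace ℝ (Fin 2))) : Prop :=
  ∀ x ∈ frontier H, ∃ x₀ ∈ H, ∃ r₀ > (0 : ℝ), x ∈ sphere x₀ r₀ ∧ ball x₀ r₀ ⊆ H

open Filter Topology InnerProductSpace
open scoped Laplacian

theorem nonpos_of_forall_pos_le_mul {a b : ℝ} (h : ∀ ε > 0, a ≤ ε * b) : a ≤ 0 := by
  have hlim : Tendsto (fun ε => ε * b) (𝓝[>] 0) (𝓝 0) := by
    simpa using (tendsto_id.mul_const b).mono_left (nhdsWithin_le_nhds (a := (0 : ℝ)))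
  exact ge_of_tendsto hlim (eventually_nhdsWithin_of_forall h)

theorem IsLocalMax.deriv_deriv_nonpos {f : ℝ → ℝ} {a : ℝ} (hf : IsLocalMax f a)
    (hc : ContinuousAt f a) : deriv (deriv f) a ≤ 0 := by
  by_contra! hpos
  have hmin : IsLocalMin f a := isLocalMin_of_deriv_deriv_pos hpos hf.deriv_eq_zero hc
  have hconst : f =ᶠ[𝓝 a] fun _ => f a := by
    filter_upwards [hf, hmin] with x hx₁ hx₂ using le_antisymm hx₁ hx₂
  have : deriv (deriv f) a = 0 := by
    rw [hconst.deriv.deriv_eq]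
    simp
  exact hpos.ne' this

theorem IsLocalMax.iteratedFDeriv_two_nonpos {E : Type*} [NormedAddCommGroup E]
    [NormedSpace ℝ E] {f : E → ℝ} {z : E} (hf : IsLocalMax f z) (hd : ContDiffAt ℝ 2 f z)
    (v : E) : iteratedFDeriv ℝ 2 f z ![v, v] ≤ 0 := by
  let γ : ℝ → E := fun t => z + t • v
  have hγ : ∀ t, HasDerivAt γ v t := fun t =>
    (((hasDerivAt_id' t).smul_const v).const_add z).congr_deriv (one_smul ℝ v)
  have hγ0 : γ 0 = z := by simp [γ]
  have hγc : Tendsto γ (𝓝 0) (𝓝 z) := hγ0 ▸ (hγ 0).continuousAt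
  have hdiff : ∀ᶠ y in 𝓝 z, DifferentiableAt ℝ f y :=
    (hd.eventually (by simp)).mono fun y hy => hy.differentiableAt (by simp)
  have hderiv : deriv (f ∘ γ) =ᶠ[𝓝 0] fun t => fderiv ℝ f (γ t) v := by
    filter_upwards [hγc.eventually hdiff] with t ht
    exact (ht.hasFDerivAt.comp_hasDerivAt t (hγ t)).deriv
  have hderiv2 :
      HasDerivAt (fun t => fderiv ℝ f (γ t) v) (fderiv ℝ (fderiv ℝ f) z v v) 0 := by
    have hF : DifferentiableAt ℝ (fderiv ℝ f) z :=
      (hd.fderiv_right (m := 1) (by norm_num)).differentiableAt (by simp)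
    exact (ContinuousLinearMap.apply ℝ ℝ v).hasFDerivAt.comp_hasDerivAt 0
      (hF.hasFDerivAt.comp_hasDerivAt_of_eq 0 (hγ 0) hγ0.symm)
  have hmax : IsLocalMax (f ∘ γ) 0 := by
    simpa [IsLocalMax, IsMaxFilter, hγ0] using hγc.eventually hf
  have hneg := hmax.deriv_deriv_nonpos (hd.continuousAt.comp_of_eq (hγ 0).continuousAt hγ0)
  rw [hderiv.deriv_eq, hderiv2.deriv] at hneg
  simpa [iteratedFDeriv_two_apply] using hneg

namespace InnerProductSpace

variable {E : Type*} [NormedAddCommGroup E] [InnerProductSpace ℝ E] [FiniteDimensional ℝ E]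

theorem _root_.IsLocalMax.laplacian_nonpos {f : E → ℝ} {z : E} (hf : IsLocalMax f z)
    (hd : ContDiffAt ℝ 2 f z) : Δ f z ≤ 0 := by
  rw [laplacian_eq_iteratedFDeriv_stdOrthonormalBasis]
  exact Finset.sum_nonpos fun i _ => hf.iteratedFDeriv_two_nonpos hd _

theorem laplacian_norm_sq (x : E) : Δ (fun y : E => ‖y‖ ^ 2) x = 2 * Module.finrank ℝ E := by
  have hD : fderiv ℝ (fun y : E => ‖y‖ ^ 2) = fun y => (2 • innerSL ℝ : E →L[ℝ] E →L[ℝ] ℝ) y := by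
    ext1 y
    exact (hasStrictFDerivAt_norm_sq y).hasFDerivAt.fderiv
  have hD2 : fderiv ℝ (fderiv ℝ fun y : E => ‖y‖ ^ 2) x = 2 • innerSL ℝ := by
    rw [hD]
    exact ContinuousLinearMap.fderiv _
  have hb (i) : innerSL ℝ (stdOrthonormalBasis ℝ E i) (stdOrthonormalBasis ℝ E i) = 1 := by
    rw [innerSL_apply_apply, real_inner_self_eq_norm_sq, (stdOrthonormalBasis ℝ E).orthonormal.1 i]
    norm_num
  rw [laplacian_eq_iteratedFDeriv_stdOrthonormalBasis]
  simp [iteratedFDeriv_two_apply, hD2, hb, mul_comm]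

theorem nonpos_on_closure_of_laplacian_nonneg [Nontrivial E] {U : Set E} {g : E → ℝ}
    (hUo : IsOpen U) (hUb : Bornology.IsBounded U) (hgc : ContinuousOn g (closure U))
    (hgd : ContDiffOn ℝ 2 g U) (hΔ : ∀ x ∈ U, 0 ≤ Δ g x) (hfr : ∀ x ∈ frontier U, g x ≤ 0) :
    ∀ x ∈ closure U, g x ≤ 0 := by
  intro x hx
  obtain ⟨r, hr⟩ := hUb.closure.subset_closedBall 0
  refine nonpos_of_forall_pos_le_mul (b := r ^ 2) fun ε hε => ?_
  -- the strictly subharmonic perturbation `gε` cannot attain its maximum inside `U`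
  let gε : E → ℝ := g + ε • fun y => ‖y‖ ^ 2
  obtain ⟨z, hz, hmax⟩ := hUb.isCompact_closure.exists_isMaxOn (f := gε) ⟨x, hx⟩
    (hgc.add (continuous_const.smul (continuous_norm.pow 2)).continuousOn)
  have hzU : z ∉ U := fun hzU => by
    have hgz : ContDiffAt ℝ 2 g z := hgd.contDiffAt (hUo.mem_nhds hzU)
    have hsq : ContDiffAt ℝ 2 (fun y : E => ‖y‖ ^ 2) z := (contDiff_norm_sq ℝ).contDiffAt
    have hεsq : ContDiffAt ℝ 2 (ε • fun y : E => ‖y‖ ^ 2) z := hsq.const_smul ε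
    have hΔz : Δ gε z = Δ g z + ε * (2 * Module.finrank ℝ E) := by
      rw [hgz.laplacian_add hεsq, laplacian_smul ε hsq, laplacian_norm_sq, smul_eq_mul]
    have hloc : IsLocalMax gε z :=
      hmax.isLocalMax (mem_of_superset (hUo.mem_nhds hzU) subset_closure)
    have hdim : (0 : ℝ) < Module.finrank ℝ E := by exact_mod_cast Module.finrank_pos
    nlinarith [hloc.laplacian_nonpos (hgz.add hεsq), hΔ z hzU]
  have hzfr : z ∈ frontier U := by
    rw [hUo.frontier_eq]
    exact ⟨hz, hzU⟩
  have hzr : ‖z‖ ^ 2 ≤ r ^ 2 := by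
    gcongr
    exact mem_closedBall_zero_iff.1 (hr hz)
  calc g x ≤ g x + ε * ‖x‖ ^ 2 := le_add_of_nonneg_right (by positivity)
    _ ≤ g z + ε * ‖z‖ ^ 2 := hmax hx
    _ ≤ 0 + ε * r ^ 2 := by gcongr; exact hfr z hzfr
    _ = ε * r ^ 2 := zero_add _

variable {G : Type*} [NormedAddCommGroup G] [InnerProductSpace ℝ G] [FiniteDimensional ℝ G]

theorem laplacian_comp_linearIsometryEquiv (L : E ≃ₗᵢ[ℝ] G) (f : G → ℝ) :
    Δ (f ∘ L) = Δ f ∘ L := by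
  ext x
  rw [laplacian_eq_iteratedFDeriv_orthonormalBasis _ (stdOrthonormalBasis ℝ E),
    laplacian_eq_iteratedFDeriv_orthonormalBasis _ ((stdOrthonormalBasis ℝ E).map L)]
  have hcomp := L.toContinuousLinearEquiv.iteratedFDerivWithin_comp_right f uniqueDiffOn_univ
    (mem_univ (L x)) 2
  simp only [preimage_univ, iteratedFDerivWithin_univ] at hcomp
  simp only [show f ∘ L = f ∘ L.toContinuousLinearEquiv from rfl, hcomp]
  refine Finset.sum_congr rfl fun i _ => ?_
  simp only [ContinuousMultilinearMap.compContinuousLinearMap_apply, OrthonormalBasis.map_apply]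
  congr 1
  ext j
  fin_cases j <;> rfl

theorem HarmonicAt.comp_linearIsometryEquiv {f : G → ℝ} (L : E ≃ₗᵢ[ℝ] G) {x : E}
    (hf : HarmonicAt f (L x)) : HarmonicAt (f ∘ L) x := by
  refine ⟨hf.1.comp x L.contDiff.contDiffAt, ?_⟩
  rw [laplacian_comp_linearIsometryEquiv]
  exact L.continuous.continuousAt.tendsto.eventually hf.2

end InnerProductSpace

local notation "ℝ²" => EuclideanSpace ℝ (Fin 2)

theorem laplacian_eq_laplacian_of_contDiffAt {f : ℝ² → ℝ} {x : ℝ²} (hf : ContDiffAt ℝ 2 f x) :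
    laplacian f x = Δ f x := by
  have hF : DifferentiableAt ℝ (fderiv ℝ f) x :=
    (hf.fderiv_right (m := 1) (by norm_num)).differentiableAt (by simp)
  rw [laplacian_eq_iteratedFDeriv_orthonormalBasis f (EuclideanSpace.basisFun (Fin 2) ℝ)]
  simp [laplacian, iteratedFDeriv_two_apply, fderiv_clm_apply hF (differentiableAt_const _)]

theorem harmonicOnNhd_of_laplacian_eq_zero {Ω : Set ℝ²} {f : ℝ² → ℝ} (hΩ : IsOpen Ω)
    (hf : ContDiffOn ℝ 2 f Ω) (hΔ : ∀ x ∈ Ω, laplacian f x = 0) : HarmonicOnNhd f Ω := by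
  intro x hx
  refine ⟨hf.contDiffAt (hΩ.mem_nhds hx), ?_⟩
  filter_upwards [hΩ.mem_nhds hx] with y hy
  rw [← laplacian_eq_laplacian_of_contDiffAt (hf.contDiffAt (hΩ.mem_nhds hy))]
  exact hΔ y hy

theorem harmonicAt_log_norm {x : ℝ²} (hx : x ≠ 0) : HarmonicAt (fun y => Real.log ‖y‖) x := by
  let L := Complex.orthonormalBasisOneI.repr.symm
  have h := analyticAt_id.harmonicAt_log_norm (z := L x) (by simpa using hx)
  convert h.comp_linearIsometryEquiv L using 1
  ext y
  simp

/-- Proved by the maximum principle on `ball 0 R ∩ Ω`, with `R` so large that the right-hand side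
exceeds `M` on the sphere of radius `R`. -/
theorem le_mul_log_norm_sub_log {Ω : Set ℝ²} {u : ℝ² → ℝ} {ρ M a : ℝ} (hΩo : IsOpen Ω)
    (hρ : 0 < ρ) (hρΩ : ∀ y ∈ closure Ω, ρ ≤ ‖y‖) (huc : ContinuousOn u (closure Ω))
    (hud : ContDiffOn ℝ 2 u Ω) (hΔ : ∀ y ∈ Ω, 0 ≤ Δ u y) (hfr : ∀ y ∈ frontier Ω, u y ≤ 0)
    (hM : ∀ y ∈ closure Ω, u y ≤ M) (ha : 0 < a) :
    ∀ x ∈ closure Ω, u x ≤ a * (Real.log ‖x‖ - Real.log ρ) := by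
  intro x hx
  let ψ : ℝ² → ℝ := fun y => Real.log ‖y‖ - Real.log ρ
  have hψ : ∀ y ∈ closure Ω, HarmonicAt ψ y := fun y hy =>
    (harmonicAt_log_norm (norm_pos_iff.1 (hρ.trans_le (hρΩ y hy)))).sub (harmonicAt_const _)
  have hψnn : ∀ y ∈ closure Ω, 0 ≤ ψ y := fun y hy =>
    sub_nonneg.2 (Real.log_le_log hρ (hρΩ y hy))
  let R := ‖x‖ + ρ * Real.exp (M / a)
  have hψR : ∀ y : ℝ², ‖y‖ = R → M ≤ a * ψ y := by
    intro y hy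
    have hψy : M / a ≤ ψ y := by
      rw [le_sub_iff_add_le', hy]
      calc Real.log ρ + M / a = Real.log (ρ * Real.exp (M / a)) := by
            rw [Real.log_mul hρ.ne' (Real.exp_pos _).ne', Real.log_exp]
        _ ≤ Real.log R := Real.log_le_log (by positivity) (le_add_of_nonneg_left (norm_nonneg x))
    calc M = a * (M / a) := (mul_div_cancel₀ M ha.ne').symm
      _ ≤ a * ψ y := by gcongr
  let U := ball (0 : ℝ²) R ∩ Ω
  have hUΩ : closure U ⊆ closure Ω := closure_mono inter_subset_right
  have hcmp := nonpos_on_closure_of_laplacian_nonneg (g := u - a • ψ)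
    (isOpen_ball.inter hΩo) (isBounded_ball.subset inter_subset_left)
    ((huc.mono hUΩ).sub (ContinuousOn.const_smul
      (fun y hy => (hψ y (hUΩ hy)).1.continuousAt.continuousWithinAt) a))
    ((hud.mono inter_subset_right).sub fun y hy =>
      ((hψ y (subset_closure hy.2)).1.const_smul a).contDiffWithinAt)
    (fun y hy => by
      have hψy := (hψ y (subset_closure hy.2)).const_smul (c := a)
      rw [(hud.contDiffAt (hΩo.mem_nhds hy.2)).laplacian_sub hψy.1, hψy.2.self_of_nhds]
      simpa using hΔ y hy.2)
    (fun y hy => by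
      rcases frontier_inter_subset _ _ hy with ⟨hyR, hyc⟩ | ⟨-, hyΩ⟩
      · rw [frontier_ball 0 (by positivity), mem_sphere_zero_iff_norm] at hyR
        simpa using (hM y hyc).trans (hψR y hyR)
      · simpa using (hfr y hyΩ).trans
          (mul_nonneg ha.le (hψnn y (frontier_subset_closure hyΩ))))
    x (isOpen_ball.inter_closure ⟨mem_ball_zero_iff.2 (lt_add_of_pos_right _ (by positivity)), hx⟩)
  simpa [sub_nonpos] using hcmp

/-- A Phragmén–Lindelöf principle: in the plane, boundedness from above replaces the boundary
condition at infinity. -/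
theorem nonpos_on_closure_of_bddAbove {Ω : Set ℝ²} {u : ℝ² → ℝ} {M : ℝ} (hΩo : IsOpen Ω)
    (h0 : (0 : ℝ²) ∉ closure Ω) (huc : ContinuousOn u (closure Ω)) (hud : ContDiffOn ℝ 2 u Ω)
    (hΔ : ∀ y ∈ Ω, 0 ≤ Δ u y) (hfr : ∀ y ∈ frontier Ω, u y ≤ 0)
    (hM : ∀ y ∈ closure Ω, u y ≤ M) : ∀ x ∈ closure Ω, u x ≤ 0 := by
  obtain ⟨ρ, hρ, hball⟩ := Metric.isOpen_iff.1 isClosed_closure.isOpen_compl 0 h0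
  have hρΩ : ∀ y ∈ closure Ω, ρ ≤ ‖y‖ := fun y hy => by
    by_contra! h
    exact hball (mem_ball_zero_iff.2 h) hy
  intro x hx
  exact nonpos_of_forall_pos_le_mul fun a ha =>
    le_mul_log_norm_sub_log hΩo hρ hρΩ huc hud hΔ hfr hM ha x hx

theorem eqOn_zero_of_harmonicOnNhd {Ω : Set ℝ²} {u : ℝ² → ℝ} {C : ℝ} (hΩo : IsOpen Ω)
    (h0 : (0 : ℝ²) ∉ closure Ω) (hu : HarmonicOnNhd u Ω) (huc : ContinuousOn u (closure Ω))
    (hfr : ∀ y ∈ frontier Ω, u y = 0) (hC : ∀ y ∈ closure Ω, |u y| ≤ C) :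
    EqOn u 0 (closure Ω) := by
  have hle : ∀ v : ℝ² → ℝ, HarmonicOnNhd v Ω → ContinuousOn v (closure Ω) →
      (∀ y ∈ frontier Ω, v y = 0) → (∀ y ∈ closure Ω, v y ≤ C) → ∀ x ∈ closure Ω, v x ≤ 0 :=
    fun v hv hvc hvfr hvC => nonpos_on_closure_of_bddAbove hΩo h0 hvc hv.contDiffOn
      (fun y hy => (hv y hy).2.self_of_nhds.ge) (fun y hy => (hvfr y hy).le) hvC
  intro x hx
  have hneg := hle (-u) hu.neg huc.neg (by simpa using hfr)
    (fun y hy => by simpa using neg_le.1 (abs_le.1 (hC y hy)).1) x hx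
  exact le_antisymm (hle u hu huc hfr (fun y hy => (abs_le.1 (hC y hy)).2) x hx)
    (by simpa using hneg)

theorem uniqueness_exterior_harmonic_general
    (H : Set (EuclideanSpace ℝ (Fin 2))) (hHo : IsOpen H)
    (hH0 : (0 : EuclideanSpace ℝ (Fin 2)) ∈ H)
    (Ω : Set (EuclideanSpace ℝ (Fin 2))) (hΩ : Ω = (closure H)ᶜ)
    (φ₁ φ₂ : EuclideanSpace ℝ (Fin 2) → ℝ)
    (h₁c : ContinuousOn φ₁ (closure Ω)) (h₂c : ContinuousOn φ₂ (closure Ω))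
    (h₁d : ContDiffOn ℝ 2 φ₁ Ω) (h₂d : ContDiffOn ℝ 2 φ₂ Ω)
    (h₁h : ∀ x ∈ Ω, laplacian φ₁ x = 0) (h₂h : ∀ x ∈ Ω, laplacian φ₂ x = 0)
    (h₁0 : ∀ x ∈ frontier Ω, φ₁ x = 0) (h₂0 : ∀ x ∈ frontier Ω, φ₂ x = 0)
    (h₁bd : ∃ C, ∀ x ∈ closure Ω, |φ₁ x - Real.log ‖x‖| ≤ C)
    (h₂bd : ∃ C, ∀ x ∈ closure Ω, |φ₂ x - Real.log ‖x‖| ≤ C) :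
    EqOn φ₁ φ₂ (closure Ω) := by
  have hΩo : IsOpen Ω := hΩ ▸ isClosed_closure.isOpen_compl
  have h0 : (0 : ℝ²) ∉ closure Ω := by
    rw [hΩ, closure_compl, notMem_compl_iff]
    exact interior_maximal subset_closure hHo hH0
  obtain ⟨C₁, hC₁⟩ := h₁bd
  obtain ⟨C₂, hC₂⟩ := h₂bd
  have hbd : ∀ y ∈ closure Ω, |(φ₁ - φ₂) y| ≤ C₁ + C₂ := fun y hy => by
    calc |φ₁ y - φ₂ y| ≤ |φ₁ y - Real.log ‖y‖| + |Real.log ‖y‖ - φ₂ y| := abs_sub_le _ _ _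
      _ ≤ C₁ + C₂ := by rw [abs_sub_comm (Real.log _)]; exact add_le_add (hC₁ y hy) (hC₂ y hy)
  have hzero := eqOn_zero_of_harmonicOnNhd hΩo h0
    ((harmonicOnNhd_of_laplacian_eq_zero hΩo h₁d h₁h).sub
      (harmonicOnNhd_of_laplacian_eq_zero hΩo h₂d h₂h))
    (h₁c.sub h₂c) (fun y hy => by simp [h₁0 y hy, h₂0 y hy]) hbd
  exact fun x hx => sub_eq_zero.1 (hzero hx)

/-- Uniqueness of the solution of the exterior Dirichlet problem with logarithmic growth. -/
theorem uniqueness_exterior_harmonic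
    (H : Set (EuclideanSpace ℝ (Fin 2))) (hHo : IsOpen H)
    (hHb : Bornology.IsBounded H) (hH0 : (0 : EuclideanSpace ℝ (Fin 2)) ∈ H)
    (htb : InteriorTangentBall H)
    (Ω : Set (EuclideanSpace ℝ (Fin 2))) (hΩ : Ω = (closure H)ᶜ)
    (φ₁ φ₂ : EuclideanSpace ℝ (Fin 2) → ℝ)
    (h₁c : ContinuousOn φ₁ (closure Ω)) (h₂c : ContinuousOn φ₂ (closure Ω))
    (h₁d : ContDiffOn ℝ 2 φ₁ Ω) (h₂d : ContDiffOn ℝ 2 φ₂ Ω)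
    (h₁h : ∀ x ∈ Ω, laplacian φ₁ x = 0) (h₂h : ∀ x ∈ Ω, laplacian φ₂ x = 0)
    (h₁0 : ∀ x ∈ frontier Ω, φ₁ x = 0) (h₂0 : ∀ x ∈ frontier Ω, φ₂ x = 0)
    (h₁bd : ∃ C, ∀ x ∈ closure Ω, |φ₁ x - Real.log ‖x‖| ≤ C)
    (h₂bd : ∃ C, ∀ x ∈ closure Ω, |φ₂ x - Real.log ‖x‖| ≤ C) :
    EqOn φ₁ φ₂ (closure Ω) :=
  uniqueness_exterior_harmonic_general H hHo hH0 Ω hΩ φ₁ φ₂ h₁c h₂c h₁d h₂d h₁h h₂h h₁0 h₂0 h₁bd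
    h₂bd
end

section
/- Let m > 1 and let F_M(ξ) = c_m (ξ_M² − |ξ|²)₊^{1/(m−1)} on ℝ² with ξ_M = κ M^{(m−1)/(2m)} for fixed constants c_m, κ > 0. Then there exists C > 0 (depending on m, c_m, κ and an upper bound for the masses) such that for all 0 < M⁻ ≤ M⁺ bounded above and all ξ ∈ ℝ²: 0 ≤ F_{M⁺}(ξ) − F_{M⁻}(ξ) ≤ C((M⁺)^{1/m} − (M⁻)^{1/m}) if 1 < m ≤ 2, and 0 ≤ F_{M⁺}(ξ) − F_{M⁻}(ξ) ≤ C((M⁺)^{(m−1)/m} − (M⁻)^{(m−1)/m})^{1/(m−1)} if m > 2. -/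
/-!
Write `r = ‖ξ‖²`, `p = 1/(m-1)` and `ρ(M) = κ² M^((m-1)/m)`, so that `F_M(ξ) = c_m ((ρ(M) - r)₊)^p`.
Truncation `a ↦ (a - r)₊` moves the two squared radii `ρ(M⁻) ≤ ρ(M⁺)` towards `0` without
increasing their distance. For `m ≤ 2` the power `x ↦ x^p` is convex, so its increments grow to the
right and are at most `ρ(M⁺)^p - ρ(M⁻)^p ∝ (M⁺)^(1/m) - (M⁻)^(1/m)`; for `m > 2` it is
subadditive, so the increment is at most `(ρ(M⁺) - ρ(M⁻))^p`.
-/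

open Set

section Increments

variable {𝕜 : Type*} [Field 𝕜] [LinearOrder 𝕜] [IsStrictOrderedRing 𝕜] {s : Set 𝕜} {f : 𝕜 → 𝕜}

theorem ConvexOn.add_sub_le_add_sub (hf : ConvexOn 𝕜 s f) {a b d : 𝕜} (ha : a ∈ s)
    (hbd : b + d ∈ s) (hab : a ≤ b) (hd : 0 ≤ d) :
    f (a + d) - f a ≤ f (b + d) - f b := by
  rcases hd.eq_or_lt with rfl | hd_pos
  · simp
  -- both increment quotients are compared with the slope of the chord from `a` to `b + d`
  have hmem : ∀ x, a ≤ x → x ≤ b + d → x ∈ s := fun x hax hxb =>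
    hf.1.ordConnected.out ha hbd ⟨hax, hxb⟩
  have h₁ := hf.secant_mono ha (hmem (a + d) (by linarith) (by linarith)) hbd
    (by linarith) (by linarith) (by linarith)
  have h₂ := hf.secant_mono hbd ha (hmem b hab (by linarith)) (by linarith) (by linarith) hab
  rw [← neg_div_neg_eq (f a - _), ← neg_div_neg_eq (f b - _)] at h₂
  simp only [neg_sub, add_sub_cancel_left, sub_add_cancel_left, neg_neg] at h₁ h₂
  exact (div_le_div_iff_of_pos_right hd_pos).1 (h₁.trans h₂)

theorem max_sub_zero_le_add_sub {x y : 𝕜} (t : 𝕜) (hxy : y ≤ x) :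
    max (x - t) 0 ≤ max (y - t) 0 + (x - y) :=
  max_le (by linarith [le_max_left (y - t) 0]) (by linarith [le_max_right (y - t) 0])

theorem ConvexOn.map_max_sub_zero_sub_le (hf : ConvexOn 𝕜 (Ici 0) f)
    (hf_mono : MonotoneOn f (Ici 0)) {x y t : 𝕜} (hy : 0 ≤ y) (hxy : y ≤ x) (ht : 0 ≤ t) :
    f (max (x - t) 0) - f (max (y - t) 0) ≤ f x - f y := by
  have hy' : max (y - t) 0 ≤ y := max_le (by linarith) hy
  have hincr := hf.add_sub_le_add_sub (le_max_right (y - t) 0) (by simpa using hy.trans hxy) hy'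
    (sub_nonneg.2 hxy)
  rw [add_sub_cancel] at hincr
  have hle := hf_mono (le_max_right _ _) (add_nonneg (le_max_right _ _) (sub_nonneg.2 hxy))
    (max_sub_zero_le_add_sub t hxy)
  linarith

theorem MonotoneOn.map_max_sub_zero_sub_le_of_subadditive (hf_mono : MonotoneOn f (Ici 0))
    (hf_sub : ∀ a b : 𝕜, 0 ≤ a → 0 ≤ b → f (a + b) ≤ f a + f b) {x y : 𝕜} (t : 𝕜)
    (hxy : y ≤ x) :
    f (max (x - t) 0) - f (max (y - t) 0) ≤ f (x - y) := by
  have hle := hf_mono (le_max_right _ _) (add_nonneg (le_max_right _ _) (sub_nonneg.2 hxy))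
    (max_sub_zero_le_add_sub t hxy)
  linarith [hf_sub _ _ (le_max_right (y - t) 0) (sub_nonneg.2 hxy)]

end Increments

theorem Real.mul_rpow_sq {M : ℝ} (κ r : ℝ) (hM : 0 ≤ M) :
    (κ * M ^ r) ^ 2 = κ ^ 2 * M ^ (2 * r) := by
  rw [mul_pow, ← Real.rpow_mul_natCast hM, mul_comm r]
  norm_num

theorem barenblatt_profile_mass_estimate_general
    (m cm κ B : ℝ) (hm : 1 < m) (hcm : 0 < cm) (hκ : 0 < κ)
    (F : ℝ → EuclideanSpace ℝ (Fin 2) → ℝ)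
    (hF : ∀ M ξ, F M ξ = cm *
      (max ((κ * M ^ ((m - 1) / (2 * m))) ^ 2 - ‖ξ‖ ^ 2) 0) ^ (1 / (m - 1))) :
    ∃ C > (0 : ℝ), ∀ Mm Mp : ℝ, 0 < Mm → Mm ≤ Mp → Mp ≤ B →
      ∀ ξ : EuclideanSpace ℝ (Fin 2),
        0 ≤ F Mp ξ - F Mm ξ ∧
        (m ≤ 2 → F Mp ξ - F Mm ξ ≤ C * (Mp ^ (1 / m) - Mm ^ (1 / m))) ∧
        (2 < m → F Mp ξ - F Mm ξ ≤
          C * (Mp ^ ((m - 1) / m) - Mm ^ ((m - 1) / m)) ^ (1 / (m - 1))) := by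
  have hm1 : 0 < m - 1 := by linarith
  set p := 1 / (m - 1) with hp_def
  set q := (m - 1) / m with hq_def
  have hp : 0 < p := by positivity
  have hq : 0 ≤ q := by positivity
  refine ⟨cm * (κ ^ 2) ^ p, by positivity, fun Mm Mp hMm hMle _ ξ => ?_⟩
  have hMp := hMm.le.trans hMle
  have hF' : ∀ M, 0 ≤ M → F M ξ = cm * max (κ ^ 2 * M ^ q - ‖ξ‖ ^ 2) 0 ^ p := fun M hM => by
    have h2q : 2 * ((m - 1) / (2 * m)) = q := by rw [hq_def]; field_simp
    rw [hF, Real.mul_rpow_sq κ _ hM, h2q]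
  have hρ : κ ^ 2 * Mm ^ q ≤ κ ^ 2 * Mp ^ q := by gcongr
  have hmono := Real.monotoneOn_rpow_Ici_of_exponent_nonneg hp.le
  rw [hF' Mp hMp, hF' Mm hMm.le, ← mul_sub]
  refine ⟨mul_nonneg hcm.le (sub_nonneg.2 ?_), fun hm2 => ?_, fun hm2 => ?_⟩
  · exact Real.rpow_le_rpow (le_max_right _ _) (max_le_max_right 0 (by linarith)) hp.le
  · have hp1 : 1 ≤ p := one_le_one_div hm1 (by linarith)
    have hqp : q * p = 1 / m := by rw [hp_def, hq_def]; field_simp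
    calc cm * (_ - _) ≤ cm * ((κ ^ 2 * Mp ^ q) ^ p - (κ ^ 2 * Mm ^ q) ^ p) :=
          mul_le_mul_of_nonneg_left ((convexOn_rpow hp1).map_max_sub_zero_sub_le hmono
            (by positivity) hρ (by positivity)) hcm.le
      _ = cm * (κ ^ 2) ^ p * (Mp ^ (1 / m) - Mm ^ (1 / m)) := by
          rw [Real.mul_rpow (by positivity) (by positivity),
            Real.mul_rpow (by positivity) (by positivity), ← Real.rpow_mul hMp,
            ← Real.rpow_mul hMm.le, hqp]
          ring
  · have hp1 : p ≤ 1 := by rw [div_le_one hm1]; linarith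
    calc cm * (_ - _) ≤ cm * (κ ^ 2 * Mp ^ q - κ ^ 2 * Mm ^ q) ^ p :=
          mul_le_mul_of_nonneg_left (hmono.map_max_sub_zero_sub_le_of_subadditive
            (fun a b ha hb => Real.rpow_add_le_add_rpow ha hb hp.le hp1) _ hρ) hcm.le
      _ = cm * (κ ^ 2) ^ p * (Mp ^ q - Mm ^ q) ^ p := by
          rw [← mul_sub, Real.mul_rpow (by positivity)
            (sub_nonneg.2 (Real.rpow_le_rpow hMm.le hMle hq))]
          ring

/-- Lipschitz-type control of the two-dimensional Barenblatt profile with respect to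
the mass. -/
theorem barenblatt_profile_mass_estimate
    (m cm κ B : ℝ) (hm : 1 < m) (hcm : 0 < cm) (hκ : 0 < κ) (hB : 0 < B)
    (F : ℝ → EuclideanSpace ℝ (Fin 2) → ℝ)
    (hF : ∀ M ξ, F M ξ = cm *
      (max ((κ * M ^ ((m - 1) / (2 * m))) ^ 2 - ‖ξ‖ ^ 2) 0) ^ (1 / (m - 1))) :
    ∃ C > (0 : ℝ), ∀ Mm Mp : ℝ, 0 < Mm → Mm ≤ Mp → Mp ≤ B →
      ∀ ξ : EuclideanSpace ℝ (Fin 2),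
        0 ≤ F Mp ξ - F Mm ξ ∧
        (m ≤ 2 → F Mp ξ - F Mm ξ ≤ C * (Mp ^ (1 / m) - Mm ^ (1 / m))) ∧
        (2 < m → F Mp ξ - F Mm ξ ≤
          C * (Mp ^ ((m - 1) / m) - Mm ^ ((m - 1) / m)) ^ (1 / (m - 1))) :=
  barenblatt_profile_mass_estimate_general m cm κ B hm hcm hκ F hF
end
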